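/- arXiv:1610.05071 — 2 statements merged into one kernel-verified Lean document; each statement's English description precedes it below -/
import Mathlib

section
/- Let τ > 0, let k ≥ 1 be an integer, fix t ∈ (0, τ), and let p be a real polynomial of degree at most k. Then there exists a unique polynomial p̃ of degree at most k such that p̃(0) = p(0) and ∫₀^τ p̃(s)·q(s) ds = ∫₀^t p(s)·q(s) ds for every polynomial q of degree at most k−1. -/
/-!
The conditions form a square linear system on polynomials of degree `≤ k`: the map
`f ↦ (f(0), q ↦ ∫₀^τ f q)` into `ℝ × (ℝ[X]_{≤ k-1})*` goes between spaces of dimension `k + 1`.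
It is injective: if `f(0) = 0` then `f = X r` with `deg r ≤ k - 1`, and testing against `q = r`
gives `∫₀^τ s r(s)² ds = 0`, so `r` vanishes on `(0, τ]` and hence `r = 0`.
-/

open Polynomial MeasureTheory

noncomputable def intervalIntegralFromZero (a : ℝ) : ℝ[X] →ₗ[ℝ] ℝ where
  toFun f := ∫ s in (0:ℝ)..a, f.eval s
  map_add' f g := by
    simp only [eval_add]
    exact intervalIntegral.integral_add (f.continuous.intervalIntegrable ..)
      (g.continuous.intervalIntegrable ..)
  map_smul' c f := by simp

noncomputable def intervalPairing (a : ℝ) : ℝ[X] →ₗ[ℝ] ℝ[X] →ₗ[ℝ] ℝ :=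
  (LinearMap.mul ℝ ℝ[X]).compr₂ (intervalIntegralFromZero a)

theorem intervalPairing_apply (a : ℝ) (f g : ℝ[X]) :
    intervalPairing a f g = ∫ s in (0:ℝ)..a, f.eval s * g.eval s := by
  simp [intervalPairing, intervalIntegralFromZero]

theorem eq_zero_of_intervalPairing_X_mul_self {τ : ℝ} (hτ : 0 < τ) {r : ℝ[X]}
    (h : intervalPairing τ (X * r) r = 0) : r = 0 := by
  have hnonneg : ∀ s ∈ Set.Ioc 0 τ, 0 ≤ (X * r).eval s * r.eval s := fun s hs => by
    simpa [mul_assoc] using mul_nonneg hs.1.le (mul_self_nonneg (r.eval s))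
  rw [intervalPairing_apply, intervalIntegral.integral_eq_zero_iff_of_le_of_nonneg_ae hτ.le
    ((ae_restrict_iff' measurableSet_Ioc).2 (Filter.Eventually.of_forall hnonneg))
    (((X * r).continuous.mul r.continuous).intervalIntegrable _ _)] at h
  have hzero := Measure.eqOn_Ioc_of_ae_eq volume h (by fun_prop) continuousOn_const
  refine r.eq_zero_of_infinite_isRoot ((Set.Ioc_infinite hτ).mono fun s hs => ?_)
  simpa [hs.1.ne', mul_assoc] using hzero hs

theorem mem_degreeLE_nat {R : Type*} [Semiring R] {n : ℕ} {f : R[X]} :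
    f ∈ degreeLE R n ↔ f.natDegree ≤ n := by
  rw [mem_degreeLE, natDegree_le_iff_degree_le]

theorem finrank_degreeLE {R : Type*} [Ring R] [StrongRankCondition R] (n : ℕ) :
    Module.finrank R (degreeLE R n) = n + 1 := by
  rw [← degreeLT_succ_eq_degreeLE, (degreeLTEquiv R (n + 1)).finrank_eq, Module.finrank_fin_fun]

instance instFiniteDegreeLE {R : Type*} [Semiring R] (n : ℕ) :
    Module.Finite R (degreeLE R n) := by
  rw [← degreeLT_succ_eq_degreeLE]
  exact Module.Finite.equiv (degreeLTEquiv R (n + 1)).symm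

noncomputable def initialValueMoments (τ : ℝ) (n : ℕ) :
    degreeLE ℝ ↑(n + 1) →ₗ[ℝ] ℝ × Module.Dual ℝ (degreeLE ℝ n) :=
  ((leval 0).comp (degreeLE ℝ _).subtype).prod
    (((intervalPairing τ).compl₂ (degreeLE ℝ n).subtype).comp (degreeLE ℝ _).subtype)

theorem initialValueMoments_fst (τ : ℝ) (n : ℕ) (f : degreeLE ℝ ↑(n + 1)) :
    (initialValueMoments τ n f).1 = (f : ℝ[X]).eval 0 :=
  rfl

theorem initialValueMoments_snd (τ : ℝ) (n : ℕ) (f : degreeLE ℝ ↑(n + 1))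
    (q : degreeLE ℝ n) : (initialValueMoments τ n f).2 q = intervalPairing τ f q :=
  rfl

theorem initialValueMoments_injective {τ : ℝ} (hτ : 0 < τ) (n : ℕ) :
    Function.Injective (initialValueMoments τ n) := by
  rw [← LinearMap.ker_eq_bot, Submodule.eq_bot_iff]
  rintro ⟨f, hf⟩ hker
  rw [LinearMap.mem_ker] at hker
  have h0 : f.coeff 0 = 0 := by
    simpa [coeff_zero_eq_eval_zero, initialValueMoments_fst] using congr_arg Prod.fst hker
  obtain ⟨r, rfl⟩ : X ∣ f := X_dvd_iff.mpr h0
  have hr : r ∈ degreeLE ℝ n := by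
    rcases eq_or_ne r 0 with rfl | hr0
    · exact zero_mem _
    rw [mem_degreeLE_nat] at hf ⊢
    rw [natDegree_X_mul hr0] at hf
    omega
  have hmoment := initialValueMoments_snd τ n ⟨X * r, hf⟩ ⟨r, hr⟩
  rw [hker] at hmoment
  simp [eq_zero_of_intervalPairing_X_mul_self hτ hmoment.symm]

theorem initialValueMoments_bijective {τ : ℝ} (hτ : 0 < τ) (n : ℕ) :
    Function.Bijective (initialValueMoments τ n) := by
  have hinj := initialValueMoments_injective hτ n
  refine ⟨hinj, (LinearMap.injective_iff_surjective_of_finrank_eq_finrank ?_).1 hinj⟩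
  rw [Module.finrank_prod, Subspace.dual_finrank_eq, finrank_degreeLE, finrank_degreeLE,
    Module.finrank_self]
  ring

theorem initialValueMoments_eq_iff (τ : ℝ) (n : ℕ) (f : degreeLE ℝ ↑(n + 1)) (c : ℝ)
    (ℓ : ℝ[X] →ₗ[ℝ] ℝ) :
    initialValueMoments τ n f = (c, ℓ ∘ₗ (degreeLE ℝ n).subtype) ↔
      (f : ℝ[X]).eval 0 = c ∧ ∀ q : ℝ[X], q.natDegree ≤ n → intervalPairing τ f q = ℓ q := by
  simp only [Prod.ext_iff, initialValueMoments_fst, LinearMap.ext_iff, Subtype.forall,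
    initialValueMoments_snd, LinearMap.comp_apply, Submodule.subtype_apply, mem_degreeLE_nat]

theorem stmt_6_general (τ : ℝ) (hτ : 0 < τ) (k : ℕ) (hk : 1 ≤ k) (t : ℝ) (p : Polynomial ℝ) :
    ∃! pt : Polynomial ℝ, pt.natDegree ≤ k ∧ pt.eval 0 = p.eval 0 ∧
      ∀ q : Polynomial ℝ, q.natDegree ≤ k - 1 →
        ∫ s in (0:ℝ)..τ, pt.eval s * q.eval s = ∫ s in (0:ℝ)..t, p.eval s * q.eval s := by
  obtain ⟨n, rfl⟩ := Nat.exists_eq_add_of_le' hk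
  simp only [Nat.add_sub_cancel, ← intervalPairing_apply]
  have hΦ := initialValueMoments_bijective hτ n
  obtain ⟨⟨pt, hpt⟩, hpt_eq⟩ := hΦ.2 (p.eval 0, intervalPairing t p ∘ₗ (degreeLE ℝ n).subtype)
  refine ⟨pt, ⟨mem_degreeLE_nat.1 hpt, (initialValueMoments_eq_iff ..).1 hpt_eq⟩, ?_⟩
  rintro f ⟨hf, hf_eq⟩
  rw [← mem_degreeLE_nat] at hf
  rw [← initialValueMoments_eq_iff τ n ⟨f, hf⟩] at hf_eq
  exact congr_arg Subtype.val (hΦ.1 (hf_eq.trans hpt_eq.symm))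

/-- Existence and uniqueness of the approximate discrete characteristic polynomial. -/
theorem stmt_6 (τ : ℝ) (hτ : 0 < τ) (k : ℕ) (hk : 1 ≤ k) (t : ℝ)
    (ht : t ∈ Set.Ioo 0 τ) (p : Polynomial ℝ) (hp : p.natDegree ≤ k) :
    ∃! pt : Polynomial ℝ, pt.natDegree ≤ k ∧ pt.eval 0 = p.eval 0 ∧
      ∀ q : Polynomial ℝ, q.natDegree ≤ k - 1 →
        ∫ s in (0:ℝ)..τ, pt.eval s * q.eval s = ∫ s in (0:ℝ)..t, p.eval s * q.eval s :=
  stmt_6_general τ hτ k hk t p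
end

section
/- Let τ > 0, k ≥ 1. There exists a constant C_k depending only on k such that for every t ∈ [0, τ], the polynomial ρ of degree at most k determined by ρ(0) = 1 and ∫₀^τ ρ·q = ∫₀^t q for all polynomials q of degree at most k−1 satisfies sup_{s∈[0,τ]} |ρ(s)| ≤ C_k, uniformly in t and τ. -/
/-!
Write `ρ = 1 + X * p` with `p = ρ.divX` of degree at most `k - 1`. Testing the defining relation
against `q = p` gives `∫₀^τ x p(x)² dx = -∫ₜ^τ p`. The square root `N` of the left side is a norm
on polynomials of degree at most `k - 1`, so by finite dimensionality and rescaling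
`τ |p(s)| ≤ C N` on `[0, τ]` with `C` depending only on `k`. Hence `N² ≤ τ sup |p| ≤ C N`, so
`N ≤ C`, and `|ρ(s)| ≤ 1 + s |p(s)| ≤ 1 + C²`.
-/

open Polynomial MeasureTheory

theorem Polynomial.eq_zero_of_intervalIntegral_eq_zero_of_nonneg {p : ℝ[X]} {a b : ℝ}
    (hab : a < b) (hp : ∀ x ∈ Set.Icc a b, 0 ≤ p.eval x) (h : ∫ x in a..b, p.eval x = 0) :
    p = 0 := by
  have hae : (fun x => p.eval x) =ᵐ[volume.restrict (Set.Ioc a b)] 0 :=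
    (intervalIntegral.integral_eq_zero_iff_of_le_of_nonneg_ae hab.le
      ((ae_restrict_iff' measurableSet_Ioc).mpr
        (.of_forall fun x hx => hp x (Set.Ioc_subset_Icc_self hx)))
      (p.continuous.intervalIntegrable a b)).mp h
  have hroots : Set.Ioc a b ⊆ {x | p.IsRoot x} :=
    Measure.eqOn_Ioc_of_ae_eq volume hae p.continuous.continuousOn continuousOn_const
  exact p.eq_zero_of_infinite_isRoot ((Set.Ioc_infinite hab).mono hroots)

noncomputable abbrev weightedL2Core (n : ℕ) : InnerProductSpace.Core ℝ (degreeLT ℝ n) where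
  inner p q := ∫ x in (0:ℝ)..1, x * ((p : ℝ[X]).eval x * (q : ℝ[X]).eval x)
  conj_inner_symm p q := by simp only [conj_trivial, mul_comm ((q : ℝ[X]).eval _)]
  re_inner_nonneg p := intervalIntegral.integral_nonneg zero_le_one fun x hx =>
    mul_nonneg hx.1 (mul_self_nonneg _)
  add_left p q r := by
    simp only [Submodule.coe_add, eval_add, add_mul, mul_add]
    exact intervalIntegral.integral_add (Continuous.intervalIntegrable (by fun_prop) _ _)
      (Continuous.intervalIntegrable (by fun_prop) _ _)
  smul_left p q c := by
    simp only [Submodule.coe_smul, eval_smul, smul_eq_mul, conj_trivial,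
      ← intervalIntegral.integral_const_mul]
    congr 1 with x
    ring
  definite p hp := Subtype.ext <| by
    have h : X * ((p : ℝ[X]) * (p : ℝ[X])) = 0 :=
      eq_zero_of_intervalIntegral_eq_zero_of_nonneg zero_lt_one
        (fun x hx => by simpa using mul_nonneg hx.1 (mul_self_nonneg ((p : ℝ[X]).eval x)))
        (by simpa using hp)
    simpa [X_ne_zero] using h

theorem exists_abs_eval_le_mul_sqrt_integral (n : ℕ) :
    ∃ C, 0 ≤ C ∧ ∀ p : ℝ[X], p.natDegree ≤ n → ∀ s ∈ Set.Icc (0:ℝ) 1,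
      |p.eval s| ≤ C * √(∫ x in (0:ℝ)..1, x * p.eval x ^ 2) := by
  -- Restriction to `[0, 1]` is continuous for the weighted `L²` norm, by finite dimensionality.
  let _ := (weightedL2Core (n + 1)).toNormedAddCommGroup
  let _ := InnerProductSpace.ofCore (weightedL2Core (n + 1)).toCore
  have : FiniteDimensional ℝ (degreeLT ℝ (n + 1)) := .equiv (degreeLTEquiv ℝ (n + 1)).symm
  let restrict : degreeLT ℝ (n + 1) →L[ℝ] C(Set.Icc (0:ℝ) 1, ℝ) :=
    ((toContinuousMapOnAlgHom _).toLinearMap ∘ₗ (degreeLT ℝ (n + 1)).subtype).toContinuousLinearMap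
  refine ⟨‖restrict‖, norm_nonneg restrict, fun p hp s hs => ?_⟩
  have hpmem : p ∈ degreeLT ℝ (n + 1) :=
    mem_degreeLT.mpr ((degree_le_of_natDegree_le hp).trans_lt (by exact_mod_cast n.lt_succ_self))
  calc |p.eval s| = ‖restrict ⟨p, hpmem⟩ ⟨s, hs⟩‖ := rfl
    _ ≤ ‖restrict ⟨p, hpmem⟩‖ := ContinuousMap.norm_coe_le_norm _ _
    _ ≤ ‖restrict‖ * ‖(⟨p, hpmem⟩ : degreeLT ℝ (n + 1))‖ := restrict.le_opNorm _
    _ = ‖restrict‖ * √(∫ x in (0:ℝ)..1, x * p.eval x ^ 2) := by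
      simp only [sq]; rfl

theorem exists_mul_abs_eval_le_mul_sqrt_integral (n : ℕ) :
    ∃ C, 0 ≤ C ∧ ∀ τ > 0, ∀ p : ℝ[X], p.natDegree ≤ n → ∀ s ∈ Set.Icc 0 τ,
      τ * |p.eval s| ≤ C * √(∫ x in (0:ℝ)..τ, x * p.eval x ^ 2) := by
  obtain ⟨C, hC, hbound⟩ := exists_abs_eval_le_mul_sqrt_integral n
  refine ⟨C, hC, fun τ hτ p hp s hs => ?_⟩
  have hdeg : (p.comp (Polynomial.C τ * X)).natDegree ≤ n := by
    rwa [natDegree_comp, natDegree_C_mul_X τ hτ.ne', mul_one]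
  have hsτ : s / τ ∈ Set.Icc (0:ℝ) 1 :=
    ⟨div_nonneg hs.1 hτ.le, (div_le_one hτ).mpr hs.2⟩
  have hscaled := hbound _ hdeg _ hsτ
  have hint : ∫ x in (0:ℝ)..1, x * (p.comp (Polynomial.C τ * X)).eval x ^ 2
      = (τ⁻¹) ^ 2 * ∫ x in (0:ℝ)..τ, x * p.eval x ^ 2 := by
    have h := intervalIntegral.integral_comp_mul_left (fun x => x * p.eval x ^ 2) hτ.ne'
      (a := 0) (b := 1)
    simp only [mul_zero, mul_one, smul_eq_mul] at h
    rw [sq, mul_assoc, ← h, ← intervalIntegral.integral_const_mul]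
    congr 1 with x
    simp only [eval_comp, eval_mul, eval_C, eval_X]
    field_simp
  rw [hint, Real.sqrt_mul (sq_nonneg _), Real.sqrt_sq (inv_nonneg.mpr hτ.le), eval_comp] at hscaled
  simp only [eval_mul, eval_C, eval_X, mul_div_cancel₀ _ hτ.ne'] at hscaled
  calc τ * |p.eval s| ≤ τ * (C * (τ⁻¹ * √(∫ x in (0:ℝ)..τ, x * p.eval x ^ 2))) := by gcongr
    _ = C * √(∫ x in (0:ℝ)..τ, x * p.eval x ^ 2) := by field_simp

theorem Polynomial.eval_eq_mul_eval_divX_add {R : Type*} [CommSemiring R] (p : R[X]) (x : R) :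
    p.eval x = x * p.divX.eval x + p.eval 0 := by
  conv_lhs => rw [← X_mul_divX_add p]
  simp only [eval_add, eval_mul, eval_X, eval_C, coeff_zero_eq_eval_zero]

theorem Polynomial.integral_mul_eval_divX_sq (p : ℝ[X]) (a b : ℝ) :
    ∫ x in a..b, x * p.divX.eval x ^ 2 =
      (∫ x in a..b, p.eval x * p.divX.eval x) - p.eval 0 * ∫ x in a..b, p.divX.eval x := by
  have hp : ∀ x, p.eval x * p.divX.eval x = x * p.divX.eval x ^ 2 + p.eval 0 * p.divX.eval x :=
    fun x => by rw [eval_eq_mul_eval_divX_add p x]; ring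
  simp only [hp, ← intervalIntegral.integral_const_mul]
  rw [intervalIntegral.integral_add (Continuous.intervalIntegrable (by fun_prop) _ _)
    (Continuous.intervalIntegrable (by fun_prop) _ _), add_sub_cancel_right]

theorem Polynomial.sqrt_integral_mul_eval_divX_sq_le {C τ t : ℝ} (hC : 0 ≤ C) (hτ : 0 < τ)
    (ht : t ∈ Set.Icc 0 τ) {ρ : ℝ[X]} (hρ0 : ρ.eval 0 = 1)
    (horth : ∫ x in (0:ℝ)..τ, ρ.eval x * ρ.divX.eval x = ∫ x in (0:ℝ)..t, ρ.divX.eval x)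
    (hbound : ∀ s ∈ Set.Icc 0 τ,
      τ * |ρ.divX.eval s| ≤ C * √(∫ x in (0:ℝ)..τ, x * ρ.divX.eval x ^ 2)) :
    √(∫ x in (0:ℝ)..τ, x * ρ.divX.eval x ^ 2) ≤ C := by
  set p := ρ.divX
  set N := √(∫ x in (0:ℝ)..τ, x * p.eval x ^ 2)
  have hI : 0 ≤ ∫ x in (0:ℝ)..τ, x * p.eval x ^ 2 :=
    intervalIntegral.integral_nonneg hτ.le fun x hx => mul_nonneg hx.1 (sq_nonneg _)
  have htail : |∫ x in t..τ, p.eval x| ≤ C * N := by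
    have h := intervalIntegral.norm_integral_le_of_norm_le_const (a := t) (b := τ)
      (f := fun x => p.eval x) (C := C * N / τ) fun x hx => by
        rw [Set.uIoc_of_le ht.2] at hx
        rw [Real.norm_eq_abs, le_div_iff₀ hτ, mul_comm]
        exact hbound x ⟨ht.1.trans hx.1.le, hx.2⟩
    rw [Real.norm_eq_abs, abs_of_nonneg (sub_nonneg.mpr ht.2)] at h
    calc _ ≤ C * N / τ * (τ - t) := h
      _ ≤ C * N / τ * τ := by gcongr; linarith [ht.1]
      _ = C * N := div_mul_cancel₀ _ hτ.ne'
  have hNsq : N ^ 2 ≤ C * N := by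
    have hsplit := intervalIntegral.integral_add_adjacent_intervals
      (μ := volume) (p.continuous.intervalIntegrable 0 t) (p.continuous.intervalIntegrable t τ)
    rw [Real.sq_sqrt hI, integral_mul_eval_divX_sq, hρ0, one_mul, horth, ← hsplit]
    linarith [neg_abs_le (∫ x in t..τ, p.eval x)]
  nlinarith [Real.sqrt_nonneg (∫ x in (0:ℝ)..τ, x * p.eval x ^ 2)]

theorem stmt_9_general (k : ℕ) :
    ∃ Ck : ℝ, ∀ τ : ℝ, 0 < τ → ∀ t ∈ Set.Icc (0:ℝ) τ, ∀ ρ : Polynomial ℝ,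
      ρ.natDegree ≤ k → ρ.eval 0 = 1 →
      (∀ q : Polynomial ℝ, q.natDegree ≤ k - 1 →
        ∫ s in (0:ℝ)..τ, ρ.eval s * q.eval s = ∫ s in (0:ℝ)..t, q.eval s) →
      ∀ s ∈ Set.Icc (0:ℝ) τ, |ρ.eval s| ≤ Ck := by
  obtain ⟨C, hC, hbound⟩ := exists_mul_abs_eval_le_mul_sqrt_integral (k - 1)
  refine ⟨1 + C ^ 2, fun τ hτ t ht ρ hρdeg hρ0 hρint s hs => ?_⟩
  have hdeg : ρ.divX.natDegree ≤ k - 1 := by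
    rw [natDegree_divX_eq_natDegree_tsub_one]; omega
  have hN := sqrt_integral_mul_eval_divX_sq_le hC hτ ht hρ0 (hρint _ hdeg) (hbound τ hτ _ hdeg)
  calc |ρ.eval s| ≤ τ * |ρ.divX.eval s| + 1 := by
        rw [eval_eq_mul_eval_divX_add, hρ0]
        refine (abs_add_le _ _).trans ?_
        rw [abs_mul, abs_of_nonneg hs.1, abs_one]
        gcongr
        exact hs.2
    _ ≤ C * √(∫ x in (0:ℝ)..τ, x * ρ.divX.eval x ^ 2) + 1 := by linarith [hbound τ hτ _ hdeg s hs]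
    _ ≤ 1 + C ^ 2 := by nlinarith

/-- Uniform boundedness (in `t` and `τ`) of the discrete characteristic polynomial. -/
theorem stmt_9 (k : ℕ) (hk : 1 ≤ k) :
    ∃ Ck : ℝ, ∀ τ : ℝ, 0 < τ → ∀ t ∈ Set.Icc (0:ℝ) τ, ∀ ρ : Polynomial ℝ,
      ρ.natDegree ≤ k → ρ.eval 0 = 1 →
      (∀ q : Polynomial ℝ, q.natDegree ≤ k - 1 →
        ∫ s in (0:ℝ)..τ, ρ.eval s * q.eval s = ∫ s in (0:ℝ)..t, q.eval s) →
      ∀ s ∈ Set.Icc (0:ℝ) τ, |ρ.eval s| ≤ Ck :=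
  stmt_9_general k
end
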